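/- arXiv:1610.09666 — 2 statements merged into one kernel-verified Lean document; each statement's English description precedes it below -/
import Mathlib

section
/- For every integer j ≥ 1, Σ_{m=1}^{j} C(j, m) · (−1)^{j−m} / m⁴ = (−1)^{j−1} · (H_j⁴ + 6·H_j²·H_j^{(2)} + 3·(H_j^{(2)})² + 8·H_j·H_j^{(3)} + 6·H_j^{(4)}) / 24; equivalently, S(4, j) = (−1)^{j−1} · (H_j⁴ + 6·H_j²·H_j^{(2)} + 3·(H_j^{(2)})² + 8·H_j·H_j^{(3)} + 6·H_j^{(4)}) / (24 · j!). -/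
/-- The generalized transformation coefficient
`S k j = (1/j!) · Σ_{m=1}^{j} C(j,m) · (−1)^{j−m} · m^{−k}`. -/
noncomputable def S (k j : ℕ) : ℝ :=
  (1 / (Nat.factorial j : ℝ)) *
    ∑ m ∈ Finset.Icc 1 j, (Nat.choose j m : ℝ) * (-1 : ℝ) ^ (j - m) / (m : ℝ) ^ k

/-- The `r`-order harmonic number `H r n = Σ_{m=1}^{n} 1/m^r`. -/
noncomputable def H (r n : ℕ) : ℝ :=
  ∑ m ∈ Finset.Icc 1 n, 1 / (m : ℝ) ^ r

/-! With `B_k(j) = Σ_{m=1}^{j} C(j,m) (-1)^(m-1) / m^k`, Pascal's rule and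
`C(j,m-1) / m = C(j+1,m) / (j+1)` give `B_{k+1}(j+1) = B_{k+1}(j) + B_k(j+1) / (j+1)`, while
`B_0(j+1) = 1` because alternating binomial sums vanish. Hence `B_k(j)` is the complete homogeneous
symmetric polynomial of degree `k` in `1, 1/2, …, 1/j`, and the formula of the theorem is Newton's
expression of that polynomial for `k = 4` in the power sums `H r j`. The alternating sum of the
theorem is `(-1)^(j-1) B_4(j)`. -/

open Finset

theorem sum_Icc_one_eq_sum_range {M : Type*} [AddCommMonoid M] (f : ℕ → M) (n : ℕ) :
    ∑ m ∈ Icc 1 n, f m = ∑ m ∈ range n, f (m + 1) := by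
  rw [← Ico_add_one_right_eq_Icc, sum_Ico_eq_sum_range, Nat.add_sub_cancel]
  simp only [add_comm]

/-- `B_k(j)`, re-indexed by `m ↦ m + 1`. -/
noncomputable def altBinomSum (k j : ℕ) : ℝ :=
  ∑ m ∈ range j, (j.choose (m + 1) : ℝ) * (-1) ^ m / ((m : ℝ) + 1) ^ k

theorem altBinomSum_zero_succ (j : ℕ) : altBinomSum 0 (j + 1) = 1 := by
  have h := Int.alternating_sum_range_choose (n := j + 1)
  rw [if_neg j.succ_ne_zero, sum_range_succ'] at h
  have shifted : ∑ m ∈ range (j + 1), ((j + 1).choose (m + 1) : ℤ) * (-1) ^ m = 1 := calc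
    _ = -∑ m ∈ range (j + 1), (-1) ^ (m + 1) * ((j + 1).choose (m + 1) : ℤ) := by
      rw [← sum_neg_distrib]
      exact sum_congr rfl fun m _ => by ring
    _ = 1 := by simp only [pow_zero, Nat.choose_zero_right, Nat.cast_one] at h; linarith
  simp only [altBinomSum, pow_zero, div_one]
  exact_mod_cast shifted

theorem altBinomSum_succ_succ (k j : ℕ) :
    altBinomSum (k + 1) (j + 1)
      = altBinomSum (k + 1) j + altBinomSum k (j + 1) / ((j : ℝ) + 1) := by
  have hj : (j : ℝ) + 1 ≠ 0 := by positivity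
  have split_term : ∀ m ∈ range (j + 1),
      ((j + 1).choose (m + 1) : ℝ) * (-1) ^ m / ((m : ℝ) + 1) ^ (k + 1) =
        (j.choose (m + 1) : ℝ) * (-1) ^ m / ((m : ℝ) + 1) ^ (k + 1)
        + ((j + 1).choose (m + 1) : ℝ) * (-1) ^ m / ((m : ℝ) + 1) ^ k / ((j : ℝ) + 1) := by
    intro m _
    have absorb : ((j : ℝ) + 1) * j.choose m = (j + 1).choose (m + 1) * ((m : ℝ) + 1) := by
      exact_mod_cast Nat.add_one_mul_choose_eq j m
    have pascal : ((j + 1).choose (m + 1) : ℝ) = j.choose m + j.choose (m + 1) := by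
      exact_mod_cast Nat.choose_succ_succ' j m
    have hc : (j.choose (m + 1) : ℝ)
        = (j + 1).choose (m + 1) - (j + 1).choose (m + 1) * ((m : ℝ) + 1) / ((j : ℝ) + 1) := by
      rw [← absorb]
      field_simp
      linarith
    rw [hc]
    field_simp
    ring
  rw [altBinomSum, sum_congr rfl split_term, sum_add_distrib, ← sum_div, altBinomSum, altBinomSum,
    sum_range_succ _ j, Nat.choose_succ_self, Nat.cast_zero, zero_mul, zero_div, add_zero]

theorem H_succ (r j : ℕ) : H r (j + 1) = H r j + 1 / ((j : ℝ) + 1) ^ r := by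
  rw [H, H, sum_Icc_succ_top (by omega), Nat.cast_succ]

theorem altBinomSum_one (j : ℕ) : altBinomSum 1 j = H 1 j := by
  induction j with
  | zero => simp [altBinomSum, H]
  | succ j ih => rw [altBinomSum_succ_succ, ih, altBinomSum_zero_succ, H_succ, pow_one]

theorem altBinomSum_two (j : ℕ) : altBinomSum 2 j = (H 1 j ^ 2 + H 2 j) / 2 := by
  induction j with
  | zero => simp [altBinomSum, H]
  | succ j ih =>
    rw [altBinomSum_succ_succ, ih, altBinomSum_one, H_succ 1, H_succ 2]
    field_simp
    ring

theorem altBinomSum_three (j : ℕ) :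
    altBinomSum 3 j = (H 1 j ^ 3 + 3 * H 1 j * H 2 j + 2 * H 3 j) / 6 := by
  induction j with
  | zero => simp [altBinomSum, H]
  | succ j ih =>
    rw [altBinomSum_succ_succ, ih, altBinomSum_two, H_succ 1, H_succ 2, H_succ 3]
    field_simp
    ring

theorem altBinomSum_four (j : ℕ) : altBinomSum 4 j
    = (H 1 j ^ 4 + 6 * H 1 j ^ 2 * H 2 j + 3 * H 2 j ^ 2 + 8 * H 1 j * H 3 j + 6 * H 4 j) / 24 := by
  induction j with
  | zero => simp [altBinomSum, H]
  | succ j ih =>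
    rw [altBinomSum_succ_succ, ih, altBinomSum_three, H_succ 1, H_succ 2, H_succ 3, H_succ 4]
    field_simp
    ring

theorem sum_choose_neg_one_pow_sub_div (k j : ℕ) :
    ∑ m ∈ Icc 1 j, (j.choose m : ℝ) * (-1) ^ (j - m) / (m : ℝ) ^ k
      = (-1) ^ (j - 1) * altBinomSum k j := by
  rw [sum_Icc_one_eq_sum_range, altBinomSum, mul_sum]
  refine sum_congr rfl fun m hm => ?_
  obtain ⟨d, rfl⟩ := Nat.exists_eq_add_of_lt (mem_range.mp hm)
  have sign : (-1 : ℝ) ^ d = (-1) ^ (d + m) * (-1) ^ m := by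
    rw [pow_add, mul_assoc, ← mul_pow, neg_one_mul, neg_neg, one_pow, mul_one]
  rw [show m + d + 1 - (m + 1) = d by omega, show m + d + 1 - 1 = d + m by omega, sign]
  push_cast
  ring

theorem stmt_5_general (j : ℕ) :
    (∑ m ∈ Finset.Icc 1 j, (Nat.choose j m : ℝ) * (-1 : ℝ) ^ (j - m) / (m : ℝ) ^ 4)
      = (-1 : ℝ) ^ (j - 1) * ((H 1 j) ^ 4 + 6 * (H 1 j) ^ 2 * H 2 j
        + 3 * (H 2 j) ^ 2 + 8 * H 1 j * H 3 j + 6 * H 4 j) / 24 ∧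
    S 4 j = (-1 : ℝ) ^ (j - 1) * ((H 1 j) ^ 4 + 6 * (H 1 j) ^ 2 * H 2 j
        + 3 * (H 2 j) ^ 2 + 8 * H 1 j * H 3 j + 6 * H 4 j)
      / (24 * (Nat.factorial j : ℝ)) := by
  rw [S, sum_choose_neg_one_pow_sub_div, altBinomSum_four]
  constructor <;> ring

theorem stmt_5 (j : ℕ) (hj : 1 ≤ j) :
    (∑ m ∈ Finset.Icc 1 j, (Nat.choose j m : ℝ) * (-1 : ℝ) ^ (j - m) / (m : ℝ) ^ 4)
      = (-1 : ℝ) ^ (j - 1) * ((H 1 j) ^ 4 + 6 * (H 1 j) ^ 2 * H 2 j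
        + 3 * (H 2 j) ^ 2 + 8 * H 1 j * H 3 j + 6 * H 4 j) / 24 ∧
    S 4 j = (-1 : ℝ) ^ (j - 1) * ((H 1 j) ^ 4 + 6 * (H 1 j) ^ 2 * H 2 j
        + 3 * (H 2 j) ^ 2 + 8 * H 1 j * H 3 j + 6 * H 4 j)
      / (24 * (Nat.factorial j : ℝ)) :=
  stmt_5_general j
end

section
/- For all integers k ≥ 0 and j ≥ 1, the exponential harmonic numbers are recovered from the generalized transformation coefficients by H_j^{(k+1)} / j! = Σ_{i=1}^{j} S(k, i) / (i · (j−i)!). -/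
/-!
Expanding `S k i` and exchanging the two sums, the coefficient of `m⁻ᵏ` on the right-hand side
is `(1/j!) Σ_{i=m}^{j} (-1)^{i-m} C(j,i) C(i,m) / i`. Since `C(j,i) C(i,m) = C(j,m) C(j-m,i-m)`,
this is `C(j,m)/j!` times the alternating sum `Σ_t (-1)^t C(n,t) / (m+t)` with `n = j - m`, which
up to sign is the `n`-th forward difference of `x ↦ 1/x` at `m`, namely `n! (m-1)! / (n+m)!`.
Hence the coefficient is `1/(m · j!)`, and summing over `m` gives `H (k+1) j / j!`.
-/

open Finset Nat fwdDiff

variable {K : Type*} [Field K] [CharZero K]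

theorem fwdDiff_iter_inv_add_one (n m : ℕ) :
    Δ_[1] ^[n] (fun x : ℕ ↦ ((x : K) + 1)⁻¹) m = (-1) ^ n * n ! * m ! / (m + n + 1)! := by
  induction n generalizing m with
  | zero =>
    rw [Function.iterate_zero_apply, pow_zero, factorial_zero, add_zero, factorial_succ]
    push_cast
    field_simp [factorial_ne_zero]
  | succ n ih =>
    rw [Function.iterate_succ_apply', fwdDiff, ih, ih, show m + 1 + n + 1 = m + (n + 1) + 1 by ring,
      factorial_succ (m + (n + 1)), factorial_succ n, factorial_succ m,
      show m + (n + 1) = m + n + 1 by ring]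
    have h : ((m + n + 1 + 1 : ℕ) : K) ≠ 0 := Nat.cast_ne_zero.mpr (succ_ne_zero _)
    push_cast at h ⊢
    field_simp [factorial_ne_zero]
    ring

theorem sum_range_neg_one_pow_mul_choose_div (n m : ℕ) :
    ∑ t ∈ range (n + 1), (-1 : K) ^ t * n.choose t / (m + 1 + t) =
      n ! * m ! / (m + n + 1)! := by
  have h := fwdDiff_iter_eq_sum_shift (1 : ℕ) (fun x : ℕ ↦ ((x : K) + 1)⁻¹) n m
  rw [fwdDiff_iter_inv_add_one] at h
  calc ∑ t ∈ range (n + 1), (-1 : K) ^ t * n.choose t / (m + 1 + t)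
      = (-1) ^ n * ∑ t ∈ range (n + 1),
          ((-1 : ℤ) ^ (n - t) * n.choose t) • (((m + t • 1 : ℕ) : K) + 1)⁻¹ := by
        rw [mul_sum]
        refine sum_congr rfl fun t ht ↦ ?_
        obtain ⟨d, rfl⟩ := Nat.exists_eq_add_of_le (Nat.lt_succ_iff.mp (mem_range.mp ht))
        have hsign : (-1 : K) ^ t = (-1) ^ (t + d) * (-1) ^ d := by
          rw [pow_add, mul_assoc, ← pow_add, ← two_mul, pow_mul, neg_one_sq, one_pow, mul_one]
        simp only [zsmul_eq_mul, smul_eq_mul, Nat.add_sub_cancel_left, hsign]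
        push_cast
        ring
    _ = n ! * m ! / (m + n + 1)! := by
        have hsq : (-1 : K) ^ n * (-1) ^ n = 1 := by rw [← mul_pow]; norm_num
        rw [← h]
        linear_combination (n ! * m ! / (m + n + 1)! : K) * hsq

theorem sum_Icc_neg_one_pow_mul_choose_mul_choose_div {m j : ℕ} (hm : 0 < m) (hmj : m ≤ j) :
    ∑ i ∈ Icc m j, (-1 : K) ^ (i - m) * j.choose i * i.choose m / i = 1 / m := by
  obtain ⟨m, rfl⟩ := Nat.exists_eq_add_of_lt hm
  obtain ⟨n, rfl⟩ := Nat.exists_eq_add_of_le hmj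
  rw [zero_add, ← Ico_add_one_right_eq_Icc, sum_Ico_eq_sum_range,
    show m + 1 + n + 1 - (m + 1) = n + 1 by omega]
  calc ∑ t ∈ range (n + 1), (-1 : K) ^ (m + 1 + t - (m + 1)) * (m + 1 + n).choose (m + 1 + t) *
          (m + 1 + t).choose (m + 1) / ((m + 1 + t : ℕ) : K)
      = (m + 1 + n).choose (m + 1) *
          ∑ t ∈ range (n + 1), (-1 : K) ^ t * n.choose t / (m + 1 + t) := by
        rw [mul_sum]
        refine sum_congr rfl fun t _ ↦ ?_
        have h := choose_mul (n := m + 1 + n) (k := m + 1 + t) (s := m + 1) (by omega)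
        rw [Nat.add_sub_cancel_left, Nat.add_sub_cancel_left] at h
        rw [Nat.add_sub_cancel_left, mul_assoc _ (((m + 1 + n).choose _ : ℕ) : K),
          ← Nat.cast_mul, h]
        push_cast
        ring
    _ = 1 / (m + 1 : ℕ) := by
        have h := choose_mul_factorial_mul_factorial (n := m + 1 + n) (k := m + 1) (by omega)
        rw [Nat.add_sub_cancel_left, factorial_succ m] at h
        rw [sum_range_neg_one_pow_mul_choose_div, show m + n + 1 = m + 1 + n by omega, ← h]
        have hc : ((m + 1 + n).choose (m + 1) : K) ≠ 0 := by
          exact_mod_cast (choose_pos (by omega)).ne'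
        push_cast
        field_simp [factorial_ne_zero]

theorem S_div_mul_factorial_sub (k : ℕ) {i j : ℕ} (hij : i ≤ j) :
    S k i / (i * (j - i)! : ℝ) = (j ! : ℝ)⁻¹ *
      ∑ m ∈ Icc 1 i, 1 / (m : ℝ) ^ k * ((-1) ^ (i - m) * j.choose i * i.choose m / i) := by
  have h : (j.choose i * i ! * (j - i)! : ℝ) = j ! := by
    exact_mod_cast choose_mul_factorial_mul_factorial hij
  have hc : (j.choose i : ℝ) ≠ 0 := by exact_mod_cast (choose_pos hij).ne'
  rw [S, ← h, mul_sum, sum_div, mul_sum]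
  refine sum_congr rfl fun m _ ↦ ?_
  field_simp [factorial_ne_zero]

theorem stmt_10_general (k j : ℕ) :
    H (k + 1) j / (Nat.factorial j : ℝ) =
      ∑ i ∈ Finset.Icc 1 j, S k i / ((i : ℝ) * (Nat.factorial (j - i) : ℝ)) := by
  calc H (k + 1) j / j !
      = (j ! : ℝ)⁻¹ * ∑ m ∈ Icc 1 j, 1 / (m : ℝ) ^ k * (1 / m) := by
        rw [H, div_eq_inv_mul]
        simp only [pow_succ, one_div, mul_inv]
    _ = (j ! : ℝ)⁻¹ * ∑ m ∈ Icc 1 j, ∑ i ∈ Icc m j,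
          1 / (m : ℝ) ^ k * ((-1) ^ (i - m) * j.choose i * i.choose m / i) := by
        congr 1
        refine sum_congr rfl fun m hm ↦ ?_
        rw [← mul_sum, sum_Icc_neg_one_pow_mul_choose_mul_choose_div (mem_Icc.mp hm).1
          (mem_Icc.mp hm).2]
    _ = (j ! : ℝ)⁻¹ * ∑ i ∈ Icc 1 j, ∑ m ∈ Icc 1 i,
          1 / (m : ℝ) ^ k * ((-1) ^ (i - m) * j.choose i * i.choose m / i) := by
        rw [sum_comm' (s' := fun i ↦ Icc 1 i) (t' := Icc 1 j) fun m i ↦ by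
          simp only [mem_Icc]; omega]
    _ = ∑ i ∈ Icc 1 j, S k i / (i * (j - i)! : ℝ) := by
        rw [mul_sum]
        exact sum_congr rfl fun i hi ↦ (S_div_mul_factorial_sub k (mem_Icc.mp hi).2).symm

theorem stmt_10 (k j : ℕ) (hj : 1 ≤ j) :
    H (k + 1) j / (Nat.factorial j : ℝ) =
      ∑ i ∈ Finset.Icc 1 j, S k i / ((i : ℝ) * (Nat.factorial (j - i) : ℝ)) :=
  stmt_10_general k j
end
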